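/- For any even positive integer n and any natural number λ, the number of orbits of the rotation group Z/nZ acting on the set of proper λ-colorings of the cycle Γ_n equals (1/n) ∑_{d | n} φ(n/d) (λ−1)^d. -/

import Mathlib

/-!
By Burnside's lemma the number of orbits is the average, over the rotations `m`, of the number of
colorings fixed by `m`. A coloring fixed by `m` is periodic with period `d = gcd(n, m)`, so it is
the pullback of a proper coloring of the cycle of length `d` along `ZMod n → ZMod d`; there are
`(λ - 1)^d + (-1)^d (λ - 1)` of those, by the recurrence obtained from cutting a cycle open into a
path. Exactly `φ(n / d)` rotations have `gcd(n, m) = d`, and for even `n` the parity of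
`gcd(n, m)` is that of `m`, so the terms `(-1)^d (λ - 1)` cancel.
-/

open Finset Function

/-- The cycle is the Cayley graph of `R` with respect to `1`. -/
abbrev ProperCycleColoring (R α : Type*) [Add R] [One R] :=
  {f : R → α // ∀ x, f x ≠ f (x + 1)}

abbrev ProperPathColoring (k : ℕ) (α : Type*) :=
  {f : Fin (k + 1) → α // ∀ i : Fin k, f i.castSucc ≠ f i.succ}

variable {α : Type*}

theorem Fin.forall_ne_add_one_iff {k : ℕ} (f : Fin (k + 1) → α) :
    (∀ x, f x ≠ f (x + 1)) ↔
      (∀ i : Fin k, f i.castSucc ≠ f i.succ) ∧ f (Fin.last k) ≠ f 0 := by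
  rw [Fin.forall_fin_succ']
  simp only [Fin.coeSucc_eq_succ, Fin.last_add_one]

theorem Fin.forall_snoc_ne_iff {k : ℕ} (f : Fin (k + 1) → α) (c : α) :
    (∀ i : Fin (k + 1), (Fin.snoc f c : Fin (k + 2) → α) i.castSucc ≠
        (Fin.snoc f c : Fin (k + 2) → α) i.succ) ↔
      (∀ i : Fin k, f i.castSucc ≠ f i.succ) ∧ f (Fin.last k) ≠ c := by
  rw [Fin.forall_fin_succ']
  simp only [Fin.succ_castSucc, Fin.snoc_castSucc, Fin.succ_last, Fin.snoc_last]

namespace ProperPathColoring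

def snocEquiv (k : ℕ) :
    ProperPathColoring (k + 1) α ≃
      Σ f : ProperPathColoring k α, {c : α // f.1 (Fin.last k) ≠ c} where
  toFun F := ⟨⟨Fin.init F.1, fun i => F.2 i.castSucc⟩,
    ⟨F.1 (Fin.last _), by simpa [Fin.init] using F.2 (Fin.last k)⟩⟩
  invFun P := ⟨Fin.snoc P.1.1 P.2.1, (Fin.forall_snoc_ne_iff _ _).2 ⟨P.1.2, P.2.2⟩⟩
  left_inv F := by simp
  right_inv P := by ext <;> simp

variable [Fintype α] [DecidableEq α]

theorem card (k : ℕ) :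
    Fintype.card (ProperPathColoring k α) = Fintype.card α * (Fintype.card α - 1) ^ k := by
  induction k with
  | zero =>
    rw [pow_zero, mul_one]
    exact Fintype.card_congr ⟨fun f => f.1 0, fun c => ⟨fun _ => c, Fin.elim0⟩,
      fun f => Subtype.ext (funext fun i => congrArg f.1 (Fin.fin_one_eq_zero i).symm),
      fun _ => rfl⟩
  | succ k ih =>
    simp [Fintype.card_congr (snocEquiv k), Fintype.card_subtype_compl, ih, pow_succ, mul_assoc]

end ProperPathColoring

namespace ProperCycleColoring

instance isEmpty_fin_one : IsEmpty (ProperCycleColoring (Fin 1) α) :=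
  ⟨fun f => f.2 0 (congrArg f.1 (Subsingleton.elim _ _))⟩

def equivPathEndsNe (k : ℕ) :
    {F : ProperPathColoring (k + 1) α // F.1 (Fin.last (k + 1)) ≠ F.1 0} ≃
      ProperCycleColoring (Fin (k + 2)) α where
  toFun F := ⟨F.1.1, (Fin.forall_ne_add_one_iff _).2 ⟨F.1.2, F.2⟩⟩
  invFun f := ⟨⟨f.1, ((Fin.forall_ne_add_one_iff f.1).1 f.2).1⟩,
    ((Fin.forall_ne_add_one_iff f.1).1 f.2).2⟩
  left_inv _ := rfl
  right_inv _ := rfl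

def equivPathEndsEq (k : ℕ) :
    {F : ProperPathColoring (k + 1) α // F.1 (Fin.last (k + 1)) = F.1 0} ≃
      ProperCycleColoring (Fin (k + 1)) α where
  toFun F := ⟨Fin.init F.1.1, by
    have h := F.1.2
    rw [← Fin.snoc_init_self F.1.1, Fin.forall_snoc_ne_iff, F.2] at h
    exact (Fin.forall_ne_add_one_iff _).2 h⟩
  invFun g := ⟨⟨Fin.snoc g.1 (g.1 0), (Fin.forall_snoc_ne_iff _ _).2
      ((Fin.forall_ne_add_one_iff g.1).1 g.2)⟩, by
    dsimp only
    rw [Fin.snoc_last, Fin.snoc_apply_zero]⟩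
  left_inv F := by
    ext1; ext1
    change Fin.snoc (Fin.init F.1.1) (F.1.1 (Fin.castSucc 0)) = _
    rw [Fin.castSucc_zero, ← F.2, Fin.snoc_init_self]
  right_inv g := Subtype.ext (Fin.init_snoc (α := fun _ => α) _ _)

variable [Fintype α] [DecidableEq α]

/-- Split the proper paths on `k + 2` vertices according to whether their ends agree: if not, the
path closes up to a cycle of length `k + 2`; if so, dropping the last vertex leaves a cycle of
length `k + 1`. -/
theorem card_add_card (k : ℕ) :
    Nat.card (ProperCycleColoring (Fin (k + 2)) α) +
        Nat.card (ProperCycleColoring (Fin (k + 1)) α) =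
      Fintype.card α * (Fintype.card α - 1) ^ (k + 1) := by
  rw [← Nat.card_congr (equivPathEndsNe k), ← Nat.card_congr (equivPathEndsEq k), add_comm,
    ← Nat.card_sum, Nat.card_congr (Equiv.sumCompl _), Nat.card_eq_fintype_card,
    ProperPathColoring.card]

theorem card_fin {R : Type*} [CommRing R] (k : ℕ) :
    (Nat.card (ProperCycleColoring (Fin (k + 1)) α) : R) =
      (Fintype.card α - 1) ^ (k + 1) + (-1) ^ (k + 1) * (Fintype.card α - 1) := by
  induction k with
  | zero => simp
  | succ k ih =>
    have hrec : (Nat.card (ProperCycleColoring (Fin (k + 2)) α) : R) +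
        Nat.card (ProperCycleColoring (Fin (k + 1)) α) =
          Fintype.card α * (Fintype.card α - 1) ^ (k + 1) := by
      rw [← Nat.cast_add, card_add_card]
      rcases Nat.eq_zero_or_pos (Fintype.card α) with h | h
      · simp [h]
      · push_cast [Nat.cast_sub h]
        rfl
    linear_combination hrec - ih

theorem card_zmod {R : Type*} [CommRing R] {d : ℕ} (hd : d ≠ 0) :
    (Nat.card (ProperCycleColoring (ZMod d) α) : R) =
      (Fintype.card α - 1) ^ d + (-1) ^ d * (Fintype.card α - 1) := by
  obtain ⟨k, rfl⟩ := Nat.exists_eq_succ_of_ne_zero hd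
  -- `ZMod (k + 1)` is `Fin (k + 1)` by definition
  exact card_fin k

end ProperCycleColoring

namespace ProperCycleColoring

section Rotation

variable {R : Type*} [AddCommGroup R] [One R]

instance : AddAction R (ProperCycleColoring R α) where
  vadd m f := ⟨fun v => f.1 (v + m), fun x => by simpa only [add_right_comm] using f.2 (x + m)⟩
  zero_vadd f := Subtype.ext (funext fun v => congrArg f.1 (add_zero v))
  add_vadd a b f := Subtype.ext (funext fun v => congrArg f.1 (add_assoc v a b).symm)

theorem mem_fixedBy_iff (m : R) (f : ProperCycleColoring R α) :
    f ∈ AddAction.fixedBy _ m ↔ Periodic f.1 m :=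
  Subtype.ext_iff.trans funext_iff

theorem exists_rotate_iff_orbitRel (f g : ProperCycleColoring R α) :
    (∃ m : R, ∀ v, g.1 v = f.1 (v + m)) ↔ AddAction.orbitRel R _ f g := by
  rw [AddAction.orbitRel_apply, AddAction.mem_orbit_symm, AddAction.mem_orbit_iff]
  simp only [Subtype.ext_iff, funext_iff, eq_comm (b := g.1 _)]
  rfl

end Rotation

noncomputable def equivFactorsThrough {R S : Type*} [NonAssocSemiring R] [NonAssocSemiring S]
    (π : R →+* S) (hπ : Surjective π) :
    ProperCycleColoring S α ≃ {f : ProperCycleColoring R α // FactorsThrough f.1 π} where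
  toFun g := ⟨⟨g.1 ∘ π, fun x => by
      simpa only [comp_apply, map_add, map_one] using g.2 (π x)⟩,
    fun _ _ h => congrArg g.1 h⟩
  invFun f := ⟨f.1.1 ∘ surjInv hπ, fun y => by
    have h : f.1.1 (surjInv hπ (y + 1)) = f.1.1 (surjInv hπ y + 1) :=
      f.2 (by rw [map_add, map_one, surjInv_eq hπ, surjInv_eq hπ])
    simpa only [comp_apply, h] using f.1.2 (surjInv hπ y)⟩
  left_inv g := Subtype.ext (funext fun y => congrArg g.1 (surjInv_eq hπ y))
  right_inv f := Subtype.ext (Subtype.ext (funext fun x => f.2 (surjInv_eq hπ (π x))))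

end ProperCycleColoring

namespace ZMod

variable {n : ℕ} [NeZero n]

theorem periodic_natCast_gcd_val {f : ZMod n → α} {m : ZMod n} (hf : Periodic f m) :
    Periodic f (n.gcd m.val : ZMod n) := by
  have hbezout : (n.gcd m.val : ZMod n) = (Nat.gcdB n m.val : ℤ) • m := by
    have := congrArg (Int.cast : ℤ → ZMod n) (Nat.gcd_eq_gcd_ab n m.val)
    push_cast [ZMod.natCast_self, ZMod.natCast_zmod_val] at this
    rw [this, zero_mul, zero_add, zsmul_eq_mul, mul_comm]
  rw [hbezout]
  exact hf.zsmul _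

theorem factorsThrough_castHom_of_periodic {d : ℕ} (hd : d ∣ n) {f : ZMod n → α}
    (hf : Periodic f (d : ZMod n)) : FactorsThrough f (castHom hd (ZMod d)) := by
  intro x y hxy
  obtain ⟨t, ht⟩ : d ∣ (y - x).val := by
    rw [← natCast_eq_zero_iff, ← cast_eq_val, ← castHom_apply (h := hd), map_sub, hxy,
      sub_self]
  have hy : y = x + t • (d : ZMod n) := by
    rw [nsmul_eq_mul, ← Nat.cast_mul, mul_comm, ← ht, natCast_zmod_val, add_sub_cancel]
  rw [hy, hf.nsmul]

theorem periodic_iff_factorsThrough_castHom (f : ZMod n → α) (m : ZMod n) :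
    Periodic f m ↔
      FactorsThrough f (castHom (Nat.gcd_dvd_left n m.val) (ZMod (n.gcd m.val))) := by
  refine ⟨fun hf => factorsThrough_castHom_of_periodic _ (periodic_natCast_gcd_val hf),
    fun hf v => hf ?_⟩
  rw [map_add, add_eq_left, castHom_apply, cast_eq_val, natCast_eq_zero_iff]
  exact Nat.gcd_dvd_right n m.val

theorem sum_val_eq_sum_range {M : Type*} [AddCommMonoid M] (F : ℕ → M) :
    ∑ m : ZMod n, F m.val = ∑ i ∈ range n, F i := by
  obtain ⟨k, rfl⟩ := Nat.exists_eq_succ_of_ne_zero (NeZero.ne n)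
  exact Fin.sum_univ_eq_sum_range F _

end ZMod

theorem ProperCycleColoring.natCard_fixedBy {n : ℕ} [NeZero n] (m : ZMod n) :
    Nat.card (AddAction.fixedBy (ProperCycleColoring (ZMod n) α) m) =
      Nat.card (ProperCycleColoring (ZMod (n.gcd m.val)) α) :=
  Nat.card_congr <| (Equiv.subtypeEquivRight fun f =>
    (mem_fixedBy_iff m f).trans (ZMod.periodic_iff_factorsThrough_castHom f.1 m)).trans
      (equivFactorsThrough _ (ZMod.castHom_surjective _)).symm

theorem AddAction.sum_natCard_fixedBy_eq_natCard_orbits_mul_card (G X : Type*) [AddGroup G]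
    [Fintype G] [AddAction G X] [Finite X] :
    ∑ g : G, Nat.card (fixedBy X g) = Nat.card (orbitRel.Quotient G X) * Fintype.card G := by
  classical
  have := Fintype.ofFinite X
  simpa only [Nat.card_eq_fintype_card] using sum_card_fixedBy_eq_card_orbits_mul_card_addGroup G X

theorem Nat.sum_range_gcd_eq_sum_divisors {M : Type*} [AddCommMonoid M] (n : ℕ) (F : ℕ → M) :
    ∑ i ∈ range n, F (n.gcd i) = ∑ d ∈ n.divisors, Nat.totient (n / d) • F d := by
  rcases eq_or_ne n 0 with rfl | hn
  · simp
  rw [← sum_fiberwise_of_maps_to (g := n.gcd) (t := n.divisors)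
    fun i _ => Nat.mem_divisors.2 ⟨Nat.gcd_dvd_left n i, hn⟩]
  refine sum_congr rfl fun d hd => ?_
  rw [Nat.totient_div_of_dvd (Nat.dvd_of_mem_divisors hd), ← sum_const]
  exact sum_congr rfl fun i hi => by rw [(mem_filter.1 hi).2]

theorem Even.neg_one_pow_gcd {R : Type*} [Monoid R] [HasDistribNeg R] {n : ℕ} (hn : Even n)
    (i : ℕ) : (-1 : R) ^ n.gcd i = (-1) ^ i := by
  have hparity : Even (n.gcd i) ↔ Even i := by
    simp only [even_iff_two_dvd, Nat.dvd_gcd_iff, hn.two_dvd, true_and]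
  rcases Nat.even_or_odd i with hi | hi
  · rw [hi.neg_one_pow, (hparity.2 hi).neg_one_pow]
  · rw [hi.neg_one_pow,
      (Nat.not_even_iff_odd.1 (mt hparity.1 (Nat.not_even_iff_odd.2 hi))).neg_one_pow]

namespace ZMod

variable {n : ℕ} [NeZero n]

theorem sum_gcd_val {M : Type*} [AddCommMonoid M] (F : ℕ → M) :
    ∑ m : ZMod n, F (n.gcd m.val) = ∑ d ∈ n.divisors, Nat.totient (n / d) • F d :=
  (sum_val_eq_sum_range (F ∘ n.gcd)).trans (Nat.sum_range_gcd_eq_sum_divisors n F)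

theorem sum_neg_one_pow_gcd_val {R : Type*} [Ring R] (hn : Even n) :
    ∑ m : ZMod n, (-1 : R) ^ n.gcd m.val = 0 := by
  simp only [hn.neg_one_pow_gcd]
  rw [sum_val_eq_sum_range (fun i => (-1 : R) ^ i), neg_one_geom_sum, if_pos hn]

end ZMod

/-- For even `n > 0`, the number of orbits of the rotation group on proper
`l`-colorings of the cycle `Γ_n` equals `(1/n) ∑_{d ∣ n} φ(n/d) (l-1)^d`. -/
theorem orbital_stmt9 (n l : ℕ) (h0 : 0 < n) (heven : Even n) :
    (Nat.card (Quot (fun f g : {f : ZMod n → Fin l // ∀ x : ZMod n, f x ≠ f (x + 1)} =>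
        ∃ m : ZMod n, ∀ v : ZMod n, g.1 v = f.1 (v + m))) : ℚ) =
      (1 / (n : ℚ)) * ∑ d ∈ n.divisors, (Nat.totient (n / d) : ℚ) * ((l : ℚ) - 1) ^ d := by
  have : NeZero n := ⟨h0.ne'⟩
  have hburnside := AddAction.sum_natCard_fixedBy_eq_natCard_orbits_mul_card (ZMod n)
    (ProperCycleColoring (ZMod n) (Fin l))
  rw [ZMod.card] at hburnside
  have hfixed (m : ZMod n) :
      (Nat.card (AddAction.fixedBy (ProperCycleColoring (ZMod n) (Fin l)) m) : ℚ) =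
        ((l : ℚ) - 1) ^ n.gcd m.val + (-1) ^ n.gcd m.val * ((l : ℚ) - 1) := by
    rw [ProperCycleColoring.natCard_fixedBy,
      ProperCycleColoring.card_zmod (Nat.gcd_pos_of_pos_left _ h0).ne', Fintype.card_fin]
  rw [Nat.card_congr (Quot.congr (Equiv.refl _) ProperCycleColoring.exists_rotate_iff_orbitRel),
    one_div_mul_eq_div, eq_div_iff (Nat.cast_ne_zero.2 h0.ne')]
  calc _ = ∑ m : ZMod n,
        (Nat.card (AddAction.fixedBy (ProperCycleColoring (ZMod n) (Fin l)) m) : ℚ) := by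
        exact_mod_cast hburnside.symm
    _ = ∑ m : ZMod n, (((l : ℚ) - 1) ^ n.gcd m.val + (-1) ^ n.gcd m.val * ((l : ℚ) - 1)) :=
        sum_congr rfl fun m _ => hfixed m
    _ = _ := by
      rw [sum_add_distrib, ← sum_mul, ZMod.sum_neg_one_pow_gcd_val heven, zero_mul, add_zero,
        ZMod.sum_gcd_val (fun d => ((l : ℚ) - 1) ^ d)]
      simp only [nsmul_eq_mul]
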